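/- For every natural number n ≥ 1, the roots of the Fibonacci product polynomial P_n are exactly the n distinct real numbers x_l = 4·cos²(πl/(2n+1)) + 1 for l = 1, 2, ..., n. -/

import Mathlib

/-!
Substituting `x = 4 cos² θ + 1`, so that `x - 3 = 2 cos 2θ`, turns the recurrence of `P_n` into the
sum-to-product identity `sin((2n+5)θ) + sin((2n+1)θ) = 2 cos 2θ · sin((2n+3)θ)`, whence
`P_n(4 cos² θ + 1) · sin θ = sin((2n+1)θ)`. The angles `θ_l = πl/(2n+1)`, `1 ≤ l ≤ n`, lie in
`(0, π/2)`, where `sin θ ≠ 0` and `cos²` is injective, so they give `n` distinct roots; as `P_n` is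
monic of degree `n`, there are no others.
-/

open Polynomial

/-- Fibonacci product polynomials `P` (over `ℝ`). -/
noncomputable def fibP : ℕ → Polynomial ℝ
  | 0 => 1
  | 1 => X - 2
  | n + 2 => (X - 3) * fibP (n + 1) - fibP n

theorem monic_fibP_and_natDegree : ∀ n : ℕ, (fibP n).Monic ∧ (fibP n).natDegree = n
  | 0 => by simp [fibP]
  | 1 => by
    rw [fibP, ← C_ofNat]
    exact ⟨monic_X_sub_C 2, natDegree_X_sub_C 2⟩
  | n + 2 => by
    obtain ⟨hm₁, hd₁⟩ := monic_fibP_and_natDegree (n + 1)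
    obtain ⟨hm₀, hd₀⟩ := monic_fibP_and_natDegree n
    have hm : ((X - C 3) * fibP (n + 1)).Monic := (monic_X_sub_C 3).mul hm₁
    have hd : ((X - C 3) * fibP (n + 1)).natDegree = n + 2 := by
      rw [(monic_X_sub_C 3).natDegree_mul hm₁, natDegree_X_sub_C, hd₁, add_comm]
    have hlt : (fibP n).natDegree < ((X - C 3) * fibP (n + 1)).natDegree := by omega
    rw [fibP, ← C_ofNat]
    exact ⟨hm.sub_of_left (degree_lt_degree hlt), (natDegree_sub_eq_left_of_natDegree_lt hlt).trans hd⟩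

theorem eval_fibP_mul_sin (θ : ℝ) : ∀ n : ℕ,
    (fibP n).eval (4 * Real.cos θ ^ 2 + 1) * Real.sin θ = Real.sin ((2 * n + 1) * θ)
  | 0 => by simp [fibP]
  | 1 => by
    simp only [fibP, eval_sub, eval_X, eval_ofNat, Nat.cast_one]
    rw [show (2 * 1 + 1) * θ = θ + 2 * θ by ring, Real.sin_add, Real.cos_two_mul, Real.sin_two_mul]
    ring
  | n + 2 => by
    have h₁ := eval_fibP_mul_sin θ (n + 1)
    have h₀ := eval_fibP_mul_sin θ n
    have hsum := Real.two_mul_sin_mul_cos ((2 * ↑(n + 1) + 1) * θ) (2 * θ)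
    rw [show (2 * ↑(n + 1) + 1) * θ - 2 * θ = (2 * n + 1) * θ by push_cast; ring,
      show (2 * ↑(n + 1) + 1) * θ + 2 * θ = (2 * ↑(n + 2) + 1) * θ by push_cast; ring] at hsum
    simp only [fibP, eval_sub, eval_mul, eval_X, eval_ofNat]
    rw [Real.cos_two_mul] at hsum
    linear_combination (4 * Real.cos θ ^ 2 - 2) * h₁ - h₀ + hsum

theorem injOn_cos_sq : Set.InjOn (fun θ => Real.cos θ ^ 2) (Set.Icc 0 (Real.pi / 2)) := by
  intro a ha b hb hab
  have hnonneg : ∀ θ ∈ Set.Icc 0 (Real.pi / 2), 0 ≤ Real.cos θ := fun θ hθ =>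
    Real.cos_nonneg_of_mem_Icc ⟨by linarith [hθ.1, Real.pi_pos], hθ.2⟩
  have hle : ∀ θ ∈ Set.Icc 0 (Real.pi / 2), θ ∈ Set.Icc 0 Real.pi := fun θ hθ =>
    ⟨hθ.1, by linarith [hθ.2, Real.pi_pos]⟩
  exact Real.injOn_cos (hle a ha) (hle b hb) ((sq_eq_sq₀ (hnonneg a ha) (hnonneg b hb)).1 hab)

theorem Polynomial.isRoot_iff_exists_of_injOn {R ι : Type*} [CommRing R] [IsDomain R]
    {p : R[X]} (hp : p ≠ 0) {s : Finset ι} {f : ι → R} (hf : Set.InjOn f s)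
    (hdeg : p.natDegree ≤ s.card) (hroot : ∀ i ∈ s, p.IsRoot (f i)) (x : R) :
    p.IsRoot x ↔ ∃ i ∈ s, f i = x := by
  classical
  have hsub : s.image f ⊆ p.roots.toFinset := fun y hy => by
    obtain ⟨i, hi, rfl⟩ := Finset.mem_image.1 hy
    exact Multiset.mem_toFinset.2 ((mem_roots hp).2 (hroot i hi))
  have hcard : p.roots.toFinset.card ≤ (s.image f).card := calc
    p.roots.toFinset.card ≤ Multiset.card p.roots := Multiset.toFinset_card_le _
    _ ≤ p.natDegree := card_roots' p
    _ ≤ s.card := hdeg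
    _ = (s.image f).card := (Finset.card_image_of_injOn hf).symm
  rw [← mem_roots hp, ← Multiset.mem_toFinset, ← Finset.eq_of_subset_of_card_le hsub hcard,
    Finset.mem_image]

theorem isRoot_fibP_of_sin_eq_zero {n : ℕ} {θ : ℝ} (hθ : Real.sin θ ≠ 0)
    (h : Real.sin ((2 * n + 1) * θ) = 0) : (fibP n).IsRoot (4 * Real.cos θ ^ 2 + 1) :=
  (mul_eq_zero.1 ((eval_fibP_mul_sin θ n).trans h)).resolve_right hθ

theorem pi_mul_div_mem_Ioo {n l : ℕ} (hl₁ : 1 ≤ l) (hl₂ : l ≤ n) :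
    Real.pi * l / (2 * n + 1) ∈ Set.Ioo 0 (Real.pi / 2) := by
  have hl₁' : (1 : ℝ) ≤ l := by exact_mod_cast hl₁
  have hl₂' : (l : ℝ) ≤ n := by exact_mod_cast hl₂
  constructor
  · positivity
  · rw [div_lt_div_iff₀ (by positivity) two_pos]
    nlinarith [Real.pi_pos]

theorem stmt9_general (n : ℕ) :
    (∀ x : ℝ, (fibP n).IsRoot x ↔
      ∃ l ∈ Finset.Icc 1 n,
        x = 4 * Real.cos (Real.pi * l / (2 * n + 1)) ^ 2 + 1) ∧
    Set.InjOn (fun l : ℕ => 4 * Real.cos (Real.pi * l / (2 * n + 1)) ^ 2 + 1)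
      (Finset.Icc 1 n) := by
  have hangle : ∀ l ∈ Finset.Icc 1 n, Real.pi * l / (2 * n + 1) ∈ Set.Ioo 0 (Real.pi / 2) :=
    fun l hl => pi_mul_div_mem_Ioo (Finset.mem_Icc.1 hl).1 (Finset.mem_Icc.1 hl).2
  have hinj : Set.InjOn (fun l : ℕ => 4 * Real.cos (Real.pi * l / (2 * n + 1)) ^ 2 + 1)
      (Finset.Icc 1 n) := by
    intro a ha b hb hab
    have h := injOn_cos_sq (Set.Ioo_subset_Icc_self (hangle a ha))
      (Set.Ioo_subset_Icc_self (hangle b hb)) (by simpa using hab)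
    field_simp at h
    exact_mod_cast h
  have hroot : ∀ l ∈ Finset.Icc 1 n,
      (fibP n).IsRoot (4 * Real.cos (Real.pi * l / (2 * n + 1)) ^ 2 + 1) := by
    intro l hl
    obtain ⟨hpos, hlt⟩ := hangle l hl
    refine isRoot_fibP_of_sin_eq_zero
      (Real.sin_pos_of_pos_of_lt_pi hpos (by linarith [Real.pi_pos])).ne' ?_
    rw [mul_div_cancel₀ _ (by positivity), mul_comm, Real.sin_nat_mul_pi]
  obtain ⟨hmonic, hdeg⟩ := monic_fibP_and_natDegree n
  refine ⟨fun x => ?_, hinj⟩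
  rw [isRoot_iff_exists_of_injOn hmonic.ne_zero hinj (by simp [hdeg]) hroot]
  simp only [eq_comm]

theorem stmt9 (n : ℕ) (hn : 1 ≤ n) :
    (∀ x : ℝ, (fibP n).IsRoot x ↔
      ∃ l ∈ Finset.Icc 1 n,
        x = 4 * Real.cos (Real.pi * l / (2 * n + 1)) ^ 2 + 1) ∧
    Set.InjOn (fun l : ℕ => 4 * Real.cos (Real.pi * l / (2 * n + 1)) ^ 2 + 1)
      (Finset.Icc 1 n) :=
  stmt9_general n
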